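/- Let E be a real vector space of finite dimension n, let p be an integer with 1 ≤ p ≤ n, let u : Fin p → E be a linearly independent family, and let V be the span of the u i. Let φ be an alternating p-linear form on E with φ(u 0, …, u (p−1)) = 1. Define W := {w ∈ E : φ(x 0, …, x (p−2), w) = 0 for all x 0, …, x (p−2) ∈ V}. Then W is a linear subspace of E that is complementary to V, i.e. V ∩ W = {0} and V + W = E; in particular dim W = n − p. -/

import Mathlib

/-!
Write `p = m + 1` and let `L j w = φ (update u j w)`. As `φ` is alternating with `φ u = 1`,
`L j (u k) = δ j k`, so `V` is complementary to `⋂ j, ker (L j)` via the projection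
`e ↦ ∑ j, L j e • u j`. This intersection is `W`: the form `y ↦ φ (y 0, …, y (m-1), w)` is
alternating on `V`, hence determined by its values on distinct basis vectors `u (v 0), …,
u (v (m-1))`, and completing `v` to a permutation `σ` of `Fin (m + 1)` turns such a value into
`± L (σ (last m)) w`.
-/

open Function

namespace Fin

theorem update_comp_perm_eq_snoc {α : Type*} {m : ℕ} (u : Fin (m + 1) → α)
    (σ : Equiv.Perm (Fin (m + 1))) (w : α) :
    update u (σ (last m)) w ∘ σ = snoc (u ∘ σ ∘ castSucc) w := by
  funext i
  induction i using lastCases with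
  | last => simp
  | cast k => simp

theorem exists_perm_comp_castSucc_eq {m : ℕ} {v : Fin m → Fin (m + 1)} (hv : Injective v) :
    ∃ σ : Equiv.Perm (Fin (m + 1)), σ ∘ castSucc = v := by
  obtain ⟨j, hj⟩ : ∃ j, j ∉ Set.range v := by
    by_contra! h
    simpa using Fintype.card_le_of_surjective v h
  have hbij : Bijective (snoc v j : Fin (m + 1) → Fin (m + 1)) :=
    Finite.injective_iff_bijective.mp (snoc_injective_of_injective hv hj)
  exact ⟨Equiv.ofBijective _ hbij, funext fun k => by simp⟩

theorem ite_lt_eq_snoc {α : Type*} {m : ℕ} (x : Fin (m + 1) → α) (w : α) :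
    (fun i : Fin (m + 1) => if (i : ℕ) < m then x i else w) = snoc (x ∘ castSucc) w := by
  funext i
  induction i using lastCases with
  | last => simp
  | cast k => simp

end Fin

namespace AlternatingMap

variable {R M N : Type*} [CommRing R] [AddCommGroup M] [Module R M] [AddCommGroup N] [Module R N]
  {m : ℕ}

theorem map_snoc_perm (f : M [⋀^Fin (m + 1)]→ₗ[R] N) (u : Fin (m + 1) → M)
    (σ : Equiv.Perm (Fin (m + 1))) (w : M) :
    f (Fin.snoc (u ∘ σ ∘ Fin.castSucc) w) = σ.sign • f (update u (σ (Fin.last m)) w) := by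
  rw [← Fin.update_comp_perm_eq_snoc, map_perm]

theorem map_snoc_eq_zero_of_mem_span (f : M [⋀^Fin (m + 1)]→ₗ[R] N) {u : Fin (m + 1) → M}
    (hu : LinearIndependent R u) {w : M} (hw : ∀ j, f (update u j w) = 0)
    {y : Fin m → M} (hy : ∀ k, y k ∈ Submodule.span R (Set.range u)) :
    f (Fin.snoc y w) = 0 := by
  set V := Submodule.span R (Set.range u)
  -- rotating the slots turns `curryLeft` (first slot) into currying in the last slot
  let g : V [⋀^Fin m]→ₗ[R] N :=
    ((f.domDomCongr (finRotate (m + 1))).curryLeft w).compLinearMap V.subtype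
  have hg : ∀ z : Fin m → V, g z = f (Fin.snoc (fun k => (z k : M)) w) := fun z => by
    rw [Fin.snoc_eq_cons_rotate]; rfl
  have hg0 : g = 0 := (Module.Basis.span hu).ext_alternating fun v hv => by
    obtain ⟨σ, rfl⟩ := Fin.exists_perm_comp_castSucc_eq hv
    simp only [hg, Module.Basis.span_apply]
    rw [← comp_def, map_snoc_perm, hw, smul_zero, zero_apply]
  simpa [hg] using congr($hg0 fun k => ⟨y k, hy k⟩)

theorem forall_map_snoc_eq_zero_iff (f : M [⋀^Fin (m + 1)]→ₗ[R] N) {u : Fin (m + 1) → M}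
    (hu : LinearIndependent R u) (w : M) :
    (∀ y : Fin m → M, (∀ k, y k ∈ Submodule.span R (Set.range u)) → f (Fin.snoc y w) = 0) ↔
      ∀ j, f (update u j w) = 0 := by
  refine ⟨fun h j => ?_, fun hw y hy => map_snoc_eq_zero_of_mem_span f hu hw hy⟩
  have := h (u ∘ Equiv.swap (Fin.last m) j ∘ Fin.castSucc) fun k =>
    Submodule.subset_span ⟨_, rfl⟩
  rwa [map_snoc_perm, Equiv.swap_apply_left, smul_eq_zero_iff_eq] at this

end AlternatingMap

theorem Submodule.isCompl_span_iInf_ker {R M ι : Type*} [CommRing R] [AddCommGroup M]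
    [Module R M] [Fintype ι] [DecidableEq ι] {u : ι → M} {L : ι → M →ₗ[R] R}
    (hLu : ∀ i j, L i (u j) = if i = j then 1 else 0) :
    IsCompl (span R (Set.range u)) (⨅ i, LinearMap.ker (L i)) := by
  have hL_sum : ∀ i (c : ι → R), L i (∑ j, c j • u j) = c i := fun i c => by
    simp [hLu]
  constructor
  · rw [disjoint_def]
    rintro x hxV hxK
    obtain ⟨c, rfl⟩ := (mem_span_range_iff_exists_fun R).mp hxV
    have hc : ∀ i, c i = 0 := fun i => by
      rw [← hL_sum i c]; exact (mem_iInf _).mp hxK i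
    simp [hc]
  · rw [codisjoint_iff, eq_top_iff]
    intro e _
    rw [← add_sub_cancel (∑ j, L j e • u j) e]
    refine add_mem_sup (sum_mem fun j _ => smul_mem _ _ (subset_span ⟨j, rfl⟩)) ?_
    simp [mem_iInf, hL_sum]

theorem stmt_1_general (E : Type*) [AddCommGroup E] [Module ℝ E] [FiniteDimensional ℝ E]
    (n p : ℕ) (hn : Module.finrank ℝ E = n) (hp1 : 1 ≤ p)
    (u : Fin p → E) (hu : LinearIndependent ℝ u)
    (V : Submodule ℝ E) (hV : V = Submodule.span ℝ (Set.range u))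
    (φ : AlternatingMap ℝ E ℝ (Fin p)) (hφ : φ u = 1)
    (W : Set E)
    (hW : W = {w : E | ∀ x : Fin p → E, (∀ i : Fin p, (i : ℕ) < p - 1 → x i ∈ V) →
        φ (fun i => if (i : ℕ) < p - 1 then x i else w) = 0}) :
    ∃ W' : Submodule ℝ E, (W' : Set E) = W ∧ IsCompl V W' ∧
      Module.finrank ℝ W' = n - p := by
  subst hV hW hn
  obtain ⟨m, rfl⟩ : ∃ m, p = m + 1 := ⟨p - 1, by omega⟩
  let L : Fin (m + 1) → E →ₗ[ℝ] ℝ := φ.toMultilinearMap.toLinearMap u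
  have hL : ∀ j w, L j w = φ (update u j w) := fun _ _ => rfl
  have hLu : ∀ j k, L j (u k) = if j = k then 1 else 0 := fun j k => by
    split_ifs with h
    · simpa [hL, h] using hφ
    · exact φ.map_update_self u h
  have hcompl := Submodule.isCompl_span_iInf_ker hLu
  refine ⟨⨅ j, LinearMap.ker (L j), ?_, hcompl, ?_⟩
  · ext w
    simp only [SetLike.mem_coe, Submodule.mem_iInf, LinearMap.mem_ker, hL, Set.mem_ofPred_eq,
      Nat.add_sub_cancel, Fin.ite_lt_eq_snoc, ← φ.forall_map_snoc_eq_zero_iff hu]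
    refine ⟨fun h x hx => h _ fun k => hx _ k.isLt, fun h y hy => ?_⟩
    simpa using h (Fin.snoc y 0) fun i hi => by simpa [Fin.snoc, hi] using hy (i.castLT hi)
  · have hsum := Submodule.finrank_add_eq_of_isCompl hcompl
    rw [finrank_span_eq_card hu, Fintype.card_fin] at hsum
    omega

/-- Explicit description of the complement in the Harvey–Lawson lemma
(Lemma 3.2): the set `W = {w | φ(x 0, …, x (p-2), w) = 0 for all x i ∈ V}` is a
linear subspace complementary to `V = span u`, of dimension `n - p`. -/
theorem stmt_1 (E : Type*) [AddCommGroup E] [Module ℝ E] [FiniteDimensional ℝ E]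
    (n p : ℕ) (hn : Module.finrank ℝ E = n) (hp1 : 1 ≤ p) (hpn : p ≤ n)
    (u : Fin p → E) (hu : LinearIndependent ℝ u)
    (V : Submodule ℝ E) (hV : V = Submodule.span ℝ (Set.range u))
    (φ : AlternatingMap ℝ E ℝ (Fin p)) (hφ : φ u = 1)
    (W : Set E)
    (hW : W = {w : E | ∀ x : Fin p → E, (∀ i : Fin p, (i : ℕ) < p - 1 → x i ∈ V) →
        φ (fun i => if (i : ℕ) < p - 1 then x i else w) = 0}) :
    ∃ W' : Submodule ℝ E, (W' : Set E) = W ∧ IsCompl V W' ∧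
      Module.finrank ℝ W' = n - p :=
  stmt_1_general E n p hn hp1 u hu V hV φ hφ W hW
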